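/- arXiv:1705.05006 — 6 statements merged into one kernel-verified Lean document; each statement's English description precedes it below -/
import Mathlib

section
/- For every probability mass function p on ℕ and all integers i ≥ 1 and n ≥ 0, the sum ∑_{u∈ℕ} p(u)^i (1−p(u))^n is at most (i−1)!·n!/(n+i−1)!. -/
/-!
The term `C(a+b, a) x^a (1-x)^b` of the binomial expansion of `(x + (1 - x))^(a+b) = 1` is at
most `1`, so `p^(a+1) (1-p)^b ≤ p · a! b! / (a+b)!` for every `p ∈ [0,1]`; summing over a
probability mass function gives the bound `a! b! / (a+b)!` with `a = i - 1`, `b = n`.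
-/

open scoped Nat

theorem pow_mul_one_sub_pow_mul_choose_le_one {x : ℝ} (hx₀ : 0 ≤ x) (hx₁ : x ≤ 1) (a b : ℕ) :
    x ^ a * (1 - x) ^ b * (a + b).choose a ≤ 1 := by
  have hterms : ∀ k ∈ Finset.range (a + b + 1),
      0 ≤ x ^ k * (1 - x) ^ (a + b - k) * (a + b).choose k := fun k _ => by
    have := sub_nonneg.2 hx₁
    positivity
  calc x ^ a * (1 - x) ^ b * (a + b).choose a
      = x ^ a * (1 - x) ^ (a + b - a) * (a + b).choose a := by rw [Nat.add_sub_cancel_left]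
    _ ≤ ∑ k ∈ Finset.range (a + b + 1), x ^ k * (1 - x) ^ (a + b - k) * (a + b).choose k :=
        Finset.single_le_sum hterms (by simp)
    _ = (x + (1 - x)) ^ (a + b) := (add_pow _ _ _).symm
    _ = 1 := by simp

theorem pow_mul_one_sub_pow_le_factorial {x : ℝ} (hx₀ : 0 ≤ x) (hx₁ : x ≤ 1) (a b : ℕ) :
    x ^ a * (1 - x) ^ b ≤ a ! * b ! / (a + b)! := by
  have hchoose := pow_mul_one_sub_pow_mul_choose_le_one hx₀ hx₁ a b
  rwa [Nat.cast_add_choose, ← le_div_iff₀ (by positivity), one_div_div] at hchoose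

theorem tsum_pow_succ_mul_one_sub_pow_le {ι : Type*} {p : ι → ℝ} (hp₀ : ∀ u, 0 ≤ p u)
    (hp : HasSum p 1) (a b : ℕ) :
    ∑' u, p u ^ (a + 1) * (1 - p u) ^ b ≤ a ! * b ! / (a + b)! := by
  set M : ℝ := a ! * b ! / (a + b)!
  have hp₁ : ∀ u, p u ≤ 1 := fun u => le_hasSum hp u fun j _ => hp₀ j
  have hnonneg : ∀ u, 0 ≤ p u ^ (a + 1) * (1 - p u) ^ b := fun u => by
    have := sub_nonneg.2 (hp₁ u)
    have := hp₀ u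
    positivity
  have hle : ∀ u, p u ^ (a + 1) * (1 - p u) ^ b ≤ p u * M := fun u => by
    rw [pow_succ', mul_assoc]
    exact mul_le_mul_of_nonneg_left (pow_mul_one_sub_pow_le_factorial (hp₀ u) (hp₁ u) a b) (hp₀ u)
  have hM : HasSum (fun u => p u * M) M := by simpa using hp.mul_right M
  calc ∑' u, p u ^ (a + 1) * (1 - p u) ^ b ≤ ∑' u, p u * M :=
        (Summable.of_nonneg_of_le hnonneg hle hM.summable).tsum_le_tsum hle hM.summable
    _ = M := hM.tsum_eq

/-- **Lemma (univariate moment bound).**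
For every probability mass function `p` on `ℕ` and all integers `i ≥ 1`, `n ≥ 0`,
`∑_{u ∈ ℕ} p(u)^i (1 - p(u))^n ≤ (i-1)! n! / (n+i-1)!`. -/
theorem missing_mass_univariate_moment_bound
    (p : ℕ → ℝ) (hp_nonneg : ∀ u, 0 ≤ p u) (hp_sum : HasSum p 1)
    (i n : ℕ) (hi : 1 ≤ i) :
    ∑' u : ℕ, p u ^ i * (1 - p u) ^ n ≤
      (Nat.factorial (i - 1) : ℝ) * (Nat.factorial n : ℝ) /
        (Nat.factorial (n + i - 1) : ℝ) := by
  obtain ⟨a, rfl⟩ : ∃ a, i = a + 1 := ⟨i - 1, by omega⟩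
  rw [Nat.add_sub_cancel, ← add_assoc, Nat.add_sub_cancel, add_comm n]
  exact tsum_pow_succ_mul_one_sub_pow_le hp_nonneg hp_sum a n
end

section
/- For every probability mass function p on ℕ and all integers i ≥ 1, j ≥ 1 and n ≥ 0, the sum over all ordered pairs of distinct symbols ∑_{u,v∈ℕ, u≠v} p(u)^i p(v)^j (1−p(u)−p(v))^n is at most (i−1)!·(j−1)!·n!/(n+i+j−2)!. -/
/-!
Since `p u + p v + (1 - p u - p v) = 1` for `u ≠ v`, the trinomial theorem bounds
`p u ^ a * p v ^ b * (1 - p u - p v) ^ n` by the reciprocal `a! b! n! / (a + b + n)!` of a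
multinomial coefficient. Each summand is therefore at most `p u * p v` times that ratio, and the
weights `p u * p v` sum to `1`.
-/

open scoped Nat

section

variable {R : Type*} [CommSemiring R] [PartialOrder R] [IsOrderedRing R]

theorem choose_mul_pow_mul_pow_le_add_pow {x y : R} (hx : 0 ≤ x) (hy : 0 ≤ y) (a b : ℕ) :
    ((a + b).choose a : R) * (x ^ a * y ^ b) ≤ (x + y) ^ (a + b) := by
  rw [add_pow]
  have hterm := Finset.single_le_sum
    (f := fun k => x ^ k * y ^ (a + b - k) * ((a + b).choose k : R)) (fun k _ => by positivity)
    (Finset.mem_range.mpr (Nat.lt_succ_of_le (Nat.le_add_right a b)))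
  simpa only [Nat.add_sub_cancel_left, mul_comm, mul_left_comm] using hterm

theorem factorial_mul_pow_mul_pow_mul_pow_le {x y z : R} (hx : 0 ≤ x) (hy : 0 ≤ y) (hz : 0 ≤ z)
    (a b n : ℕ) :
    ((a + b + n)! : R) * (x ^ a * y ^ b * z ^ n) ≤
      (a ! * b ! * n ! : R) * (x + y + z) ^ (a + b + n) := by
  have hfact :
      (a + b + n)! = (a + b + n).choose (a + b) * (a + b).choose a * (a ! * b ! * n !) := by
    rw [← Nat.add_choose_mul_factorial_mul_factorial (a + b) n,
      ← Nat.add_choose_mul_factorial_mul_factorial a b, Nat.choose_symm_add, Nat.choose_symm_add]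
    ring
  calc ((a + b + n)! : R) * (x ^ a * y ^ b * z ^ n)
      = (a ! * b ! * n ! : R) * ((a + b + n).choose (a + b) *
          (((a + b).choose a * (x ^ a * y ^ b)) * z ^ n)) := by
        rw [hfact]; push_cast; ring
    _ ≤ (a ! * b ! * n ! : R) * ((a + b + n).choose (a + b) * ((x + y) ^ (a + b) * z ^ n)) := by
        gcongr
        exact choose_mul_pow_mul_pow_le_add_pow hx hy a b
    _ ≤ (a ! * b ! * n ! : R) * (x + y + z) ^ (a + b + n) := by
        gcongr
        exact choose_mul_pow_mul_pow_le_add_pow (add_nonneg hx hy) hz (a + b) n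

end

theorem pow_mul_pow_mul_pow_le_factorial_div {x y z : ℝ} (hx : 0 ≤ x) (hy : 0 ≤ y) (hz : 0 ≤ z)
    (hxyz : x + y + z = 1) (a b n : ℕ) :
    x ^ a * y ^ b * z ^ n ≤ a ! * b ! * n ! / (a + b + n)! := by
  rw [le_div_iff₀ (by positivity), mul_comm]
  simpa [hxyz] using factorial_mul_pow_mul_pow_mul_pow_le hx hy hz a b n

theorem tsum_tsum_le_of_le_mul {α β : Type*} {f : α → β → ℝ} {p : α → ℝ} {q : β → ℝ} {s t : ℝ}
    (hp : HasSum p s) (hq : HasSum q t) (hf_nonneg : ∀ u v, 0 ≤ f u v)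
    (hf_le : ∀ u v, f u v ≤ p u * q v) :
    ∑' u, ∑' v, f u v ≤ s * t := by
  have hinner : ∀ u, HasSum (fun v => p u * q v) (p u * t) := fun u => hq.mul_left (p u)
  have hinner_le : ∀ u, ∑' v, f u v ≤ p u * t := fun u =>
    ((hinner u).summable.of_nonneg_of_le (hf_nonneg u) (hf_le u)).tsum_le_tsum (hf_le u)
      (hinner u).summable |>.trans_eq (hinner u).tsum_eq
  calc ∑' u, ∑' v, f u v ≤ ∑' u, p u * t :=
        (hp.summable.mul_right t).of_nonneg_of_le (fun u => tsum_nonneg (hf_nonneg u)) hinner_le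
          |>.tsum_le_tsum hinner_le (hp.summable.mul_right t)
    _ = s * t := (hp.mul_right t).tsum_eq

theorem HasSum.add_le_of_ne {α : Type*} {p : α → ℝ} {s : ℝ} (hp : HasSum p s)
    (hp_nonneg : ∀ u, 0 ≤ p u) {u v : α} (huv : u ≠ v) :
    p u + p v ≤ s := by
  classical
  simpa [Finset.sum_pair huv] using sum_le_hasSum {u, v} (fun w _ => hp_nonneg w) hp

/-- **Lemma (bivariate moment bound).**
For every probability mass function `p` on `ℕ` and all integers `i ≥ 1`, `j ≥ 1`, `n ≥ 0`,
the sum over ordered pairs of distinct symbols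
`∑_{u ≠ v} p(u)^i p(v)^j (1 - p(u) - p(v))^n ≤ (i-1)! (j-1)! n! / (n+i+j-2)!`. -/
theorem missing_mass_bivariate_moment_bound
    (p : ℕ → ℝ) (hp_nonneg : ∀ u, 0 ≤ p u) (hp_sum : HasSum p 1)
    (i j n : ℕ) (hi : 1 ≤ i) (hj : 1 ≤ j) :
    (∑' u : ℕ, ∑' v : ℕ,
        if u ≠ v then p u ^ i * p v ^ j * (1 - p u - p v) ^ n else 0) ≤
      (Nat.factorial (i - 1) : ℝ) * (Nat.factorial (j - 1) : ℝ) *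
        (Nat.factorial n : ℝ) / (Nat.factorial (n + i + j - 2) : ℝ) := by
  obtain ⟨a, rfl⟩ : ∃ a, i = a + 1 := ⟨i - 1, by omega⟩
  obtain ⟨b, rfl⟩ : ∃ b, j = b + 1 := ⟨j - 1, by omega⟩
  rw [show n + (a + 1) + (b + 1) - 2 = a + b + n by omega, Nat.add_sub_cancel, Nat.add_sub_cancel]
  set B : ℝ := a ! * b ! * n ! / (a + b + n)!
  have hrest : ∀ u v, u ≠ v → 0 ≤ 1 - p u - p v := fun u v huv => by
    linarith [hp_sum.add_le_of_ne hp_nonneg huv]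
  refine (tsum_tsum_le_of_le_mul hp_sum (hp_sum.mul_right B) (fun u v => ?_) (fun u v => ?_)).trans_eq
    (by ring) <;> have hu := hp_nonneg u <;> have hv := hp_nonneg v
  · split_ifs with huv
    · have := hrest u v huv; positivity
    · rfl
  · split_ifs with huv
    · calc p u ^ (a + 1) * p v ^ (b + 1) * (1 - p u - p v) ^ n
          = p u * (p v * (p u ^ a * p v ^ b * (1 - p u - p v) ^ n)) := by ring
        _ ≤ p u * (p v * B) := by
          gcongr
          exact pow_mul_pow_mul_pow_le_factorial_div hu hv (hrest u v huv) (by ring) a b n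
    · positivity
end

section
/- For every probability mass function p on ℕ and every integer n ≥ 2, the risk of the Good-Turing estimator satisfies the exact identity R_n(M^GT, p) = (1/n)·∑_{u,v∈ℕ, u≠v} p(u)p(v)(1−p(u)−p(v))^{n−2}·[n·(p(u)+p(v))² − 1] + (1/n)·∑_{u∈ℕ} [p(u)(1−p(u))^{n−1} + n·p(u)²(1−p(u))^n]. -/
open scoped BigOperators

noncomputable section

/-- `p` is a probability mass function on `ℕ`. -/
def IsPMF (p : ℕ → ℝ) : Prop := (∀ u, 0 ≤ p u) ∧ HasSum p 1

/-- `N_u(X^n)`: the number of appearances of the symbol `u` in the sample `x`. -/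
def nOcc {n : ℕ} (x : Fin n → ℕ) (u : ℕ) : ℕ :=
  (Finset.univ.filter fun i => x i = u).card

/-- Probability of the sample `x` under the `n`-fold product measure `p^⊗n`. -/
def sampleProb {n : ℕ} (p : ℕ → ℝ) (x : Fin n → ℕ) : ℝ := ∏ i, p (x i)

/-- Expectation of `f(X^n)` for `X^n ∼ p^⊗n`. -/
def expct (n : ℕ) (p : ℕ → ℝ) (f : (Fin n → ℕ) → ℝ) : ℝ :=
  ∑' x : Fin n → ℕ, sampleProb p x * f x

/-- The missing mass `M₀(X^n) = ∑_u p(u) 𝟙[N_u(X^n) = 0]`. -/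
def missingMass {n : ℕ} (p : ℕ → ℝ) (x : Fin n → ℕ) : ℝ :=
  ∑' u : ℕ, if nOcc x u = 0 then p u else 0

/-- `Φ_i(X^n)`: the number of symbols appearing exactly `i` times in `x` (for `i ≥ 1`). -/
def phi {n : ℕ} (i : ℕ) (x : Fin n → ℕ) : ℕ :=
  ((Finset.univ.image x).filter fun u => nOcc x u = i).card

/-- The Good-Turing estimator `M^GT(X^n) = Φ₁(X^n)/n`. -/
def goodTuring {n : ℕ} (x : Fin n → ℕ) : ℝ := (phi 1 x : ℝ) / n

/-- The squared-error risk `R_n(M̂, p) = E[(M̂(X^n) - M₀(X^n))²]`. -/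
def risk (n : ℕ) (p : ℕ → ℝ) (M : (Fin n → ℕ) → ℝ) : ℝ :=
  expct n p fun x => (M x - missingMass p x) ^ 2

/-- The worst-case risk of the Good-Turing estimator, `sup_p R_n(M^GT, p)`. -/
def gtWorstRisk (n : ℕ) : ℝ :=
  sSup {r : ℝ | ∃ p : ℕ → ℝ, IsPMF p ∧ r = risk n p goodTuring}

open scoped ENNReal
open Finset

/-!
Write `Φ₁ = ∑_u 𝟙[N_u = 1]` and `M₀ = ∑_u p(u) 𝟙[N_u = 0]`. The risk is
`E[Φ₁²]/n² - 2 E[Φ₁ M₀]/n + E[M₀²]`, and each of these second moments is a double sum over pairs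
of symbols `(u, v)` of probabilities of joint events such as `{N_u = 1, N_v = 1}`. Splitting such an
event according to the positions at which `u` and `v` occur writes it as a disjoint union of product
events, whose probabilities under `p^⊗n` factorize over the positions; for instance
`P(N_u = 1, N_v = 1) = n (n - 1) p(u) p(v) (1 - p(u) - p(v))^(n-2)` when `u ≠ v`.
All of this is computed in `ℝ≥0∞`, where sums rearrange freely, and transferred to `ℝ` because
every moment is finite. Collecting the diagonal terms `u = v` and the off-diagonal ones gives the
two sums of the identity.
-/

theorem ENNReal.tsum_pi_prod_eq_prod_tsum {α : Type*} :
    ∀ {m : ℕ} (g : Fin m → α → ℝ≥0∞), ∑' x : Fin m → α, ∏ i, g i (x i) = ∏ i, ∑' a, g i a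
  | 0, g => by simp
  | m + 1, g => by
    rw [← (Fin.consEquiv fun _ => α).tsum_eq, ENNReal.tsum_prod', Fin.prod_univ_succ]
    simp [Fin.consEquiv, Fin.prod_univ_succ, ENNReal.tsum_mul_left, ENNReal.tsum_mul_right,
      ENNReal.tsum_pi_prod_eq_prod_tsum]

theorem ENNReal.hasSum_toReal_tsum {α : Type*} {f : α → ℝ≥0∞} (h : ∑' a, f a ≠ ∞) :
    HasSum (fun a => (f a).toReal) (∑' a, f a).toReal := by
  rw [ENNReal.tsum_toReal_eq (ENNReal.ne_top_of_tsum_ne_top h)]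
  exact ENNReal.hasSum_toReal h

theorem ENNReal.tsum_tsum_eq_tsum_add_tsum_tsum_ite {α : Type*} [DecidableEq α]
    (f : α → α → ℝ≥0∞) :
    ∑' u, ∑' v, f u v = ∑' u, f u u + ∑' u, ∑' v, if u = v then 0 else f u v := by
  rw [← ENNReal.tsum_add]
  refine tsum_congr fun u => ?_
  rw [ENNReal.tsum_eq_add_tsum_ite u]
  congr 1
  exact tsum_congr fun v => by by_cases h : u = v <;> simp [h, eq_comm]

theorem Fintype.prod_ite_eq_mul_pow {ι M : Type*} [Fintype ι] [DecidableEq ι] [CommMonoid M]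
    (i : ι) (a c : M) :
    ∏ j, (if j = i then a else c) = a * c ^ (Fintype.card ι - 1) := by
  simp [Finset.prod_ite, Finset.filter_eq', Finset.filter_ne']

theorem Fintype.prod_ite_ite_eq_mul_mul_pow {ι M : Type*} [Fintype ι] [DecidableEq ι]
    [CommMonoid M] {i k : ι} (hik : i ≠ k) (a b c : M) :
    ∏ j, (if j = i then a else if j = k then b else c) = a * b * c ^ (Fintype.card ι - 2) := by
  simp [Finset.prod_ite, Finset.filter_eq', Finset.filter_ne', hik.symm, Finset.card_erase_of_mem,
    Nat.sub_sub, mul_assoc]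

section Expectation

variable {α : Type*} {m : ℕ} (q : α → ℝ≥0∞)

def lexpct (m : ℕ) (q : α → ℝ≥0∞) (f : (Fin m → α) → ℝ≥0∞) : ℝ≥0∞ :=
  ∑' x : Fin m → α, (∏ i, q (x i)) * f x

theorem lexpct_prod (f : Fin m → α → ℝ≥0∞) :
    lexpct m q (fun x => ∏ i, f i (x i)) = ∏ i, ∑' a, q a * f i a := by
  simp_rw [lexpct, ← Finset.prod_mul_distrib]
  exact ENNReal.tsum_pi_prod_eq_prod_tsum fun i a => q a * f i a

theorem lexpct_finset_sum {ι : Type*} (s : Finset ι) (f : ι → (Fin m → α) → ℝ≥0∞) :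
    lexpct m q (fun x => ∑ i ∈ s, f i x) = ∑ i ∈ s, lexpct m q (f i) := by
  simp_rw [lexpct, Finset.mul_sum]
  exact Summable.tsum_finsetSum fun _ _ => ENNReal.summable

theorem lexpct_const_mul (c : ℝ≥0∞) (f : (Fin m → α) → ℝ≥0∞) :
    lexpct m q (fun x => c * f x) = c * lexpct m q f := by
  simp_rw [lexpct, mul_left_comm _ c, ENNReal.tsum_mul_left]

theorem lexpct_tsum_mul_tsum {ι κ : Type*} (F : ι → (Fin m → α) → ℝ≥0∞)
    (G : κ → (Fin m → α) → ℝ≥0∞) :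
    lexpct m q (fun x => (∑' i, F i x) * ∑' k, G k x)
      = ∑' i, ∑' k, lexpct m q (fun x => F i x * G k x) := by
  simp_rw [lexpct, ← ENNReal.tsum_mul_right, ← ENNReal.tsum_mul_left]
  rw [ENNReal.tsum_comm]
  exact tsum_congr fun i => ENNReal.tsum_comm

theorem hasSum_toReal_lexpct {f : (Fin m → α) → ℝ≥0∞} (h : lexpct m q f ≠ ∞) :
    HasSum (fun x => ((∏ i, q (x i)) * f x).toReal) (lexpct m q f).toReal :=
  ENNReal.hasSum_toReal_tsum h

theorem lexpct_le {f : (Fin m → α) → ℝ≥0∞} {c : ℝ≥0∞} (h : ∀ x, f x ≤ c) :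
    lexpct m q f ≤ c * (∑' a, q a) ^ m := by
  calc lexpct m q f ≤ ∑' x : Fin m → α, (∏ i, q (x i)) * c :=
        ENNReal.tsum_le_tsum fun x => by gcongr; exact h x
    _ = c * (∑' a, q a) ^ m := by
        rw [ENNReal.tsum_mul_right, ENNReal.tsum_pi_prod_eq_prod_tsum fun _ => q]
        simp [mul_comm]

theorem tsum_mul_boole_of_iff_eq {P : α → Prop} [DecidablePred P] {u : α}
    (h : ∀ a, P a ↔ a = u) : ∑' a, q a * (if P a then 1 else 0) = q u := by
  rw [tsum_eq_single u fun a ha => by simp [(h a).not.mpr ha]]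
  simp [(h u).mpr rfl]

variable [DecidableEq α]

def massOutside (q : α → ℝ≥0∞) (s : Finset α) : ℝ≥0∞ :=
  ∑' a, if a ∈ s then 0 else q a

theorem sum_add_massOutside (s : Finset α) : ∑ a ∈ s, q a + massOutside q s = ∑' a, q a := by
  have hs : ∑ a ∈ s, q a = ∑' a, if a ∈ s then q a else 0 :=
    ((tsum_eq_sum fun a ha => if_neg ha).trans (sum_congr rfl fun a ha => if_pos ha)).symm
  rw [hs, massOutside, ← ENNReal.tsum_add]
  exact tsum_congr fun a => by split_ifs <;> simp

theorem tsum_mul_boole_of_iff_notMem {P : α → Prop} [DecidablePred P] {s : Finset α}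
    (h : ∀ a, P a ↔ a ∉ s) : ∑' a, q a * (if P a then 1 else 0) = massOutside q s :=
  tsum_congr fun a => by by_cases ha : a ∈ s <;> simp [h, ha]

theorem lexpct_prod_notMem (s : Finset α) :
    lexpct m q (fun x => ∏ j, if x j ∉ s then 1 else 0) = massOutside q s ^ m := by
  rw [lexpct_prod q fun _ a => if a ∉ s then 1 else 0]
  simp only [tsum_mul_boole_of_iff_notMem q fun _ => Iff.rfl, prod_const, card_univ,
    Fintype.card_fin]

end Expectation

section Occupancy

variable {m : ℕ}

theorem nOcc_eq_zero_iff (x : Fin m → ℕ) (u : ℕ) : nOcc x u = 0 ↔ ∀ j, x j ≠ u := by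
  simp [nOcc, Finset.filter_eq_empty_iff]

theorem ite_nOcc_eq_zero {R : Type*} [CommMonoidWithZero R] (x : Fin m → ℕ) (u : ℕ) :
    (if nOcc x u = 0 then (1 : R) else 0) = ∏ j, if x j ≠ u then 1 else 0 := by
  rw [Fintype.prod_boole]
  simp [nOcc_eq_zero_iff]

theorem ite_nOcc_eq_one {R : Type*} [CommSemiring R] (x : Fin m → ℕ) (u : ℕ) :
    (if nOcc x u = 1 then (1 : R) else 0) = ∑ i, ∏ j, if (x j = u ↔ j = i) then 1 else 0 := by
  have hsingle : ∀ i, (∀ j, x j = u ↔ j = i) ↔ univ.filter (fun j => x j = u) = {i} := by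
    simp [Finset.ext_iff]
  simp_rw [Fintype.prod_boole, hsingle]
  by_cases h : nOcc x u = 1
  · obtain ⟨i₀, hi₀⟩ := Finset.card_eq_one.mp h
    simp [h, hi₀]
  · refine (if_neg h).trans (Finset.sum_eq_zero fun i _ => if_neg fun hi => h ?_).symm
    rw [nOcc, hi, card_singleton]

theorem phi_one_eq_tsum (x : Fin m → ℕ) :
    (phi 1 x : ℝ≥0∞) = ∑' u, if nOcc x u = 1 then 1 else 0 := by
  have hzero : ∀ u ∉ univ.image x, (if nOcc x u = 1 then (1 : ℝ≥0∞) else 0) = 0 := fun u hu => by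
    rw [(nOcc_eq_zero_iff x u).mpr (by simpa using hu)]
    simp
  rw [tsum_eq_sum hzero, Finset.sum_boole, phi]

theorem natCast_phi_le (i : ℕ) (x : Fin m → ℕ) : (phi i x : ℝ≥0∞) ≤ m := by
  exact_mod_cast (Finset.card_filter_le _ _).trans (Finset.card_image_le.trans (by simp))

end Occupancy

section Moments

variable {m : ℕ} (q : ℕ → ℝ≥0∞)

theorem lexpct_nOcc_eq_one_mul_prod_notMem {u : ℕ} {s : Finset ℕ} (hu : u ∉ s) :
    lexpct m q (fun x => (if nOcc x u = 1 then 1 else 0) * ∏ j, if x j ∉ s then 1 else 0)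
      = m * (q u * massOutside q (insert u s) ^ (m - 1)) := by
  have hx : ∀ x : Fin m → ℕ,
      (if nOcc x u = 1 then (1 : ℝ≥0∞) else 0) * (∏ j, if x j ∉ s then 1 else 0)
        = ∑ i, ∏ j, if (x j = u ↔ j = i) ∧ x j ∉ s then 1 else 0 := fun x => by
    simp_rw [ite_nOcc_eq_one, Finset.sum_mul, ← Finset.prod_mul_distrib, ite_zero_mul_ite_zero,
      mul_one]
  have hmass : ∀ i j : Fin m, ∑' a, q a * (if (a = u ↔ j = i) ∧ a ∉ s then 1 else 0)
      = if j = i then q u else massOutside q (insert u s) := fun i j => by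
    split_ifs with hj
    · exact tsum_mul_boole_of_iff_eq q fun a => by
        simp only [hj, iff_true, and_iff_left_iff_imp]
        rintro rfl
        exact hu
    · exact tsum_mul_boole_of_iff_notMem q fun a => by simp [hj]
  have hterm : ∀ i, lexpct m q (fun x => ∏ j, if (x j = u ↔ j = i) ∧ x j ∉ s then 1 else 0)
      = q u * massOutside q (insert u s) ^ (m - 1) := fun i => by
    rw [lexpct_prod q fun j a => if (a = u ↔ j = i) ∧ a ∉ s then 1 else 0]
    simp only [hmass i, Fintype.prod_ite_eq_mul_pow, Fintype.card_fin]
  simp_rw [hx, lexpct_finset_sum, hterm, sum_const, card_univ, Fintype.card_fin, nsmul_eq_mul]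

theorem lexpct_nOcc_eq_one (u : ℕ) :
    lexpct m q (fun x => if nOcc x u = 1 then 1 else 0)
      = m * (q u * massOutside q {u} ^ (m - 1)) := by
  simpa using lexpct_nOcc_eq_one_mul_prod_notMem (m := m) q (Finset.notMem_empty u)

theorem lexpct_nOcc_eq_one_mul_nOcc_eq_one {u v : ℕ} (huv : u ≠ v) :
    lexpct m q (fun x => (if nOcc x u = 1 then 1 else 0) * if nOcc x v = 1 then 1 else 0)
      = m * (m - 1 : ℕ) * (q u * q v * massOutside q {u, v} ^ (m - 2)) := by
  have hx : ∀ x : Fin m → ℕ,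
      (if nOcc x u = 1 then (1 : ℝ≥0∞) else 0) * (if nOcc x v = 1 then 1 else 0)
        = ∑ i, ∑ k, ∏ j, if (x j = u ↔ j = i) ∧ (x j = v ↔ j = k) then 1 else 0 := fun x => by
    simp_rw [ite_nOcc_eq_one, Finset.sum_mul_sum, ← Finset.prod_mul_distrib,
      ite_zero_mul_ite_zero, mul_one]
  have hterm : ∀ i k, lexpct m q
      (fun x => ∏ j, if (x j = u ↔ j = i) ∧ (x j = v ↔ j = k) then 1 else 0)
        = if i = k then 0 else q u * q v * massOutside q {u, v} ^ (m - 2) := fun i k => by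
    rw [lexpct_prod q fun j a => if (a = u ↔ j = i) ∧ (a = v ↔ j = k) then 1 else 0]
    split_ifs with hik
    · subst hik
      refine Finset.prod_eq_zero (mem_univ i) ?_
      exact ENNReal.tsum_eq_zero.mpr fun a => by rcases eq_or_ne a u with rfl | ha <;> simp [*]
    · calc _ = ∏ j, (if j = i then q u else if j = k then q v else massOutside q {u, v}) :=
            Finset.prod_congr rfl fun j _ => by
              split_ifs with hji hjk
              · exact tsum_mul_boole_of_iff_eq q fun a => by subst hji; grind
              · exact tsum_mul_boole_of_iff_eq q fun a => by subst hjk; grind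
              · exact tsum_mul_boole_of_iff_notMem q fun a => by simp [hji, hjk]
        _ = _ := by rw [Fintype.prod_ite_ite_eq_mul_mul_pow hik, Fintype.card_fin]
  simp_rw [hx, lexpct_finset_sum, hterm]
  simp [Finset.sum_ite, Finset.filter_ne, mul_assoc]

def lmissingMass (q : ℕ → ℝ≥0∞) (x : Fin m → ℕ) : ℝ≥0∞ :=
  ∑' u, if nOcc x u = 0 then q u else 0

theorem lmissingMass_le_tsum (x : Fin m → ℕ) : lmissingMass q x ≤ ∑' u, q u :=
  ENNReal.tsum_le_tsum fun u => by split_ifs <;> simp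

theorem lexpct_phi_one_mul_phi_one :
    lexpct m q (fun x => phi 1 x * phi 1 x) =
      ∑' u, m * (q u * massOutside q {u} ^ (m - 1)) +
        ∑' u, ∑' v, if u = v then 0
          else m * (m - 1 : ℕ) * (q u * q v * massOutside q {u, v} ^ (m - 2)) := by
  simp_rw [phi_one_eq_tsum, lexpct_tsum_mul_tsum]
  rw [ENNReal.tsum_tsum_eq_tsum_add_tsum_tsum_ite]
  congr 1
  · simp_rw [ite_zero_mul_ite_zero, and_self, mul_one, lexpct_nOcc_eq_one]
  · refine tsum_congr fun u => tsum_congr fun v => ?_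
    split_ifs with huv
    · rfl
    · exact lexpct_nOcc_eq_one_mul_nOcc_eq_one q huv

theorem lexpct_phi_one_mul_lmissingMass :
    lexpct m q (fun x => phi 1 x * lmissingMass q x) =
      ∑' u, ∑' v, if u = v then 0 else q v * (m * (q u * massOutside q {u, v} ^ (m - 1))) := by
  simp_rw [phi_one_eq_tsum, lmissingMass, lexpct_tsum_mul_tsum]
  refine tsum_congr fun u => tsum_congr fun v => ?_
  split_ifs with huv
  · subst huv
    have hx : ∀ x : Fin m → ℕ,
        (if nOcc x u = 1 then (1 : ℝ≥0∞) else 0) * (if nOcc x u = 0 then q u else 0) = 0 :=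
      fun x => by split_ifs <;> simp_all
    simp [hx, lexpct]
  · have hx : ∀ x : Fin m → ℕ,
        (if nOcc x u = 1 then (1 : ℝ≥0∞) else 0) * (if nOcc x v = 0 then q v else 0)
          = q v * ((if nOcc x u = 1 then 1 else 0) *
              ∏ j, if x j ∉ ({v} : Finset ℕ) then 1 else 0) := fun x => by
      simp only [Finset.mem_singleton, ← ite_nOcc_eq_zero]
      split_ifs <;> simp
    simp_rw [hx, lexpct_const_mul,
      lexpct_nOcc_eq_one_mul_prod_notMem q (Finset.notMem_singleton.mpr huv)]

theorem lexpct_lmissingMass_mul_lmissingMass :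
    lexpct m q (fun x => lmissingMass q x * lmissingMass q x) =
      ∑' u, q u * q u * massOutside q {u} ^ m +
        ∑' u, ∑' v, if u = v then 0 else q u * q v * massOutside q {u, v} ^ m := by
  have hpair : ∀ u v, lexpct m q
      (fun x => (if nOcc x u = 0 then q u else 0) * if nOcc x v = 0 then q v else 0)
        = q u * q v * massOutside q {u, v} ^ m := fun u v => by
    have hx : ∀ x : Fin m → ℕ,
        (if nOcc x u = 0 then q u else 0) * (if nOcc x v = 0 then q v else 0)
          = q u * q v * ∏ j, if x j ∉ ({u, v} : Finset ℕ) then 1 else 0 := fun x => by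
      rw [Fintype.prod_boole]
      simp only [nOcc_eq_zero_iff, Finset.mem_insert, Finset.mem_singleton, not_or, forall_and]
      split_ifs <;> simp_all
    simp_rw [hx, lexpct_const_mul, lexpct_prod_notMem]
  simp_rw [lmissingMass, lexpct_tsum_mul_tsum, hpair]
  rw [ENNReal.tsum_tsum_eq_tsum_add_tsum_tsum_ite]
  simp_rw [Finset.pair_eq_singleton]

end Moments

section PMF

variable {p : ℕ → ℝ}

theorem IsPMF.tsum_ofReal (hp : IsPMF p) : ∑' u, ENNReal.ofReal (p u) = 1 := by
  rw [← ENNReal.ofReal_tsum_of_nonneg hp.1 hp.2.summable, hp.2.tsum_eq, ENNReal.ofReal_one]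

theorem IsPMF.toReal_massOutside (hp : IsPMF p) (s : Finset ℕ) :
    (massOutside (ENNReal.ofReal ∘ p) s).toReal = 1 - ∑ u ∈ s, p u := by
  have h := sum_add_massOutside (ENNReal.ofReal ∘ p) s
  simp only [Function.comp_apply, hp.tsum_ofReal,
    ← ENNReal.ofReal_sum_of_nonneg fun u _ => hp.1 u] at h
  have hS : massOutside (ENNReal.ofReal ∘ p) s ≠ ∞ :=
    ne_top_of_le_ne_top ENNReal.one_ne_top (h ▸ le_add_self)
  have := congrArg ENNReal.toReal h
  rw [ENNReal.toReal_add ENNReal.ofReal_ne_top hS,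
    ENNReal.toReal_ofReal (sum_nonneg fun u _ => hp.1 u), ENNReal.toReal_one] at this
  linarith

theorem IsPMF.lexpct_ne_top (hp : IsPMF p) {m : ℕ} {f : (Fin m → ℕ) → ℝ≥0∞} {c : ℝ≥0∞}
    (hc : c ≠ ∞) (h : ∀ x, f x ≤ c) : lexpct m (ENNReal.ofReal ∘ p) f ≠ ∞ :=
  ne_top_of_le_ne_top (by simpa [hp.tsum_ofReal] using hc) (lexpct_le _ h)

theorem IsPMF.lmissingMass_le_one (hp : IsPMF p) {m : ℕ} (x : Fin m → ℕ) :
    lmissingMass (ENNReal.ofReal ∘ p) x ≤ 1 :=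
  (lmissingMass_le_tsum _ x).trans_eq hp.tsum_ofReal

theorem IsPMF.lexpct_phi_one_mul_phi_one_ne_top (hp : IsPMF p) (m : ℕ) :
    lexpct m (ENNReal.ofReal ∘ p) (fun x => phi 1 x * phi 1 x) ≠ ∞ :=
  hp.lexpct_ne_top (ENNReal.mul_ne_top (ENNReal.natCast_ne_top m) (ENNReal.natCast_ne_top m))
    fun x => mul_le_mul' (natCast_phi_le 1 x) (natCast_phi_le 1 x)

theorem IsPMF.lexpct_phi_one_mul_lmissingMass_ne_top (hp : IsPMF p) (m : ℕ) :
    lexpct m (ENNReal.ofReal ∘ p) (fun x => phi 1 x * lmissingMass (ENNReal.ofReal ∘ p) x) ≠ ∞ :=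
  hp.lexpct_ne_top (ENNReal.mul_ne_top (ENNReal.natCast_ne_top m) ENNReal.one_ne_top)
    fun x => mul_le_mul' (natCast_phi_le 1 x) (hp.lmissingMass_le_one x)

theorem IsPMF.lexpct_lmissingMass_mul_lmissingMass_ne_top (hp : IsPMF p) (m : ℕ) :
    lexpct m (ENNReal.ofReal ∘ p)
      (fun x => lmissingMass (ENNReal.ofReal ∘ p) x * lmissingMass (ENNReal.ofReal ∘ p) x) ≠ ∞ :=
  hp.lexpct_ne_top ENNReal.one_ne_top
    fun x => mul_le_one' (hp.lmissingMass_le_one x) (hp.lmissingMass_le_one x)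

theorem sampleProb_eq_toReal (hp₀ : ∀ u, 0 ≤ p u) {m : ℕ} (x : Fin m → ℕ) :
    sampleProb p x = (∏ i, (ENNReal.ofReal ∘ p) (x i)).toReal := by
  simp [sampleProb, ENNReal.toReal_prod, ENNReal.toReal_ofReal (hp₀ _)]

theorem missingMass_eq_toReal (hp₀ : ∀ u, 0 ≤ p u) {m : ℕ} (x : Fin m → ℕ) :
    missingMass p x = (lmissingMass (ENNReal.ofReal ∘ p) x).toReal := by
  rw [lmissingMass, ENNReal.tsum_toReal_eq fun u => by split_ifs <;> simp]
  exact tsum_congr fun u => by split_ifs <;> simp [hp₀ u]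

theorem risk_goodTuring_eq (hp : IsPMF p) (n : ℕ) :
    risk n p goodTuring =
      (lexpct n (ENNReal.ofReal ∘ p) fun x => phi 1 x * phi 1 x).toReal / n ^ 2
        - 2 * (lexpct n (ENNReal.ofReal ∘ p) fun x =>
            phi 1 x * lmissingMass (ENNReal.ofReal ∘ p) x).toReal / n
        + (lexpct n (ENNReal.ofReal ∘ p) fun x =>
            lmissingMass (ENNReal.ofReal ∘ p) x * lmissingMass (ENNReal.ofReal ∘ p) x).toReal := by
  have hΦΦ := hasSum_toReal_lexpct _ (hp.lexpct_phi_one_mul_phi_one_ne_top n)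
  have hΦM := hasSum_toReal_lexpct _ (hp.lexpct_phi_one_mul_lmissingMass_ne_top n)
  have hMM := hasSum_toReal_lexpct _ (hp.lexpct_lmissingMass_mul_lmissingMass_ne_top n)
  rw [risk, expct, ← (((hΦΦ.div_const _).sub ((hΦM.mul_left 2).div_const _)).add hMM).tsum_eq]
  refine tsum_congr fun x => ?_
  simp only [sampleProb_eq_toReal hp.1, goodTuring, missingMass_eq_toReal hp.1,
    ENNReal.toReal_mul, ENNReal.toReal_natCast]
  ring

theorem IsPMF.risk_diag_term_eq {n : ℕ} (hp : IsPMF p) (hn : n ≠ 0) (u : ℕ) :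
    (n * ((ENNReal.ofReal ∘ p) u * massOutside (ENNReal.ofReal ∘ p) {u} ^ (n - 1))).toReal / n ^ 2
      + ((ENNReal.ofReal ∘ p) u * (ENNReal.ofReal ∘ p) u
          * massOutside (ENNReal.ofReal ∘ p) {u} ^ n).toReal
      = 1 / n * (p u * (1 - p u) ^ (n - 1) + n * p u ^ 2 * (1 - p u) ^ n) := by
  simp only [ENNReal.toReal_mul, ENNReal.toReal_pow, ENNReal.toReal_natCast,
    hp.toReal_massOutside, sum_singleton, Function.comp_apply, ENNReal.toReal_ofReal (hp.1 u)]
  field_simp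

theorem IsPMF.risk_offDiag_term_eq {n : ℕ} (hp : IsPMF p) (hn : 2 ≤ n) (u v : ℕ) :
    (if u = v then 0 else n * (n - 1 : ℕ) * ((ENNReal.ofReal ∘ p) u * (ENNReal.ofReal ∘ p) v
        * massOutside (ENNReal.ofReal ∘ p) {u, v} ^ (n - 2))).toReal / n ^ 2
      - 2 * (if u = v then 0 else (ENNReal.ofReal ∘ p) v * (n * ((ENNReal.ofReal ∘ p) u
        * massOutside (ENNReal.ofReal ∘ p) {u, v} ^ (n - 1)))).toReal / n
      + (if u = v then 0 else (ENNReal.ofReal ∘ p) u * (ENNReal.ofReal ∘ p) v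
        * massOutside (ENNReal.ofReal ∘ p) {u, v} ^ n).toReal
      = 1 / n * (if u ≠ v then
          p u * p v * (1 - p u - p v) ^ (n - 2) * ((n : ℝ) * (p u + p v) ^ 2 - 1) else 0) := by
  by_cases huv : u = v
  · simp [huv]
  rw [if_neg huv, if_neg huv, if_neg huv, if_pos huv]
  simp only [ENNReal.toReal_mul, ENNReal.toReal_pow, ENNReal.toReal_natCast,
    hp.toReal_massOutside, sum_pair huv, Function.comp_apply, ENNReal.toReal_ofReal (hp.1 _)]
  obtain ⟨k, rfl⟩ := Nat.exists_eq_add_of_le hn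
  simp only [Nat.add_sub_cancel_left, show 2 + k - 1 = k + 1 by omega, Nat.cast_add]
  field_simp
  ring

end PMF

/-- **Exact risk identity for the Good-Turing estimator** (equation (9)).
For every pmf `p` on `ℕ` and every `n ≥ 2`,
`R_n(M^GT, p) = (1/n) ∑_{u ≠ v} p(u)p(v)(1-p(u)-p(v))^{n-2} [n (p(u)+p(v))² - 1]
             + (1/n) ∑_u [p(u)(1-p(u))^{n-1} + n p(u)² (1-p(u))^n]`. -/
theorem goodTuring_risk_identity
    (p : ℕ → ℝ) (hp : IsPMF p) (n : ℕ) (hn : 2 ≤ n) :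
    risk n p goodTuring =
      (1 / n) * (∑' u : ℕ, ∑' v : ℕ,
          if u ≠ v then
            p u * p v * (1 - p u - p v) ^ (n - 2) * ((n : ℝ) * (p u + p v) ^ 2 - 1)
          else 0)
      + (1 / n) * ∑' u : ℕ,
          (p u * (1 - p u) ^ (n - 1) + (n : ℝ) * p u ^ 2 * (1 - p u) ^ n) := by
  have hΦΦ := hp.lexpct_phi_one_mul_phi_one_ne_top n
  have hΦM := hp.lexpct_phi_one_mul_lmissingMass_ne_top n
  have hMM := hp.lexpct_lmissingMass_mul_lmissingMass_ne_top n
  rw [risk_goodTuring_eq hp]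
  simp only [lexpct_phi_one_mul_phi_one, lexpct_phi_one_mul_lmissingMass,
    lexpct_lmissingMass_mul_lmissingMass, ← ENNReal.tsum_prod] at hΦΦ hΦM hMM ⊢
  obtain ⟨hD₁, hO₁⟩ := ENNReal.add_ne_top.mp hΦΦ
  obtain ⟨hD₃, hO₃⟩ := ENNReal.add_ne_top.mp hMM
  have hdiag := ((ENNReal.hasSum_toReal_tsum hD₁).div_const (n ^ 2)).add
    (ENNReal.hasSum_toReal_tsum hD₃)
  have hoff := (((ENNReal.hasSum_toReal_tsum hO₁).div_const (n ^ 2)).sub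
    (((ENNReal.hasSum_toReal_tsum hΦM).mul_left 2).div_const n)).add
    (ENNReal.hasSum_toReal_tsum hO₃)
  simp only [hp.risk_diag_term_eq (by omega : n ≠ 0)] at hdiag
  simp only [hp.risk_offDiag_term_eq hn] at hoff
  have hO := hoff.summable.tsum_prod.symm.trans hoff.tsum_eq
  have hD := hdiag.tsum_eq
  simp only [tsum_mul_left] at hO hD
  rw [ENNReal.toReal_add hD₁ hO₁, ENNReal.toReal_add hD₃ hO₃, hO, hD]
  ring
end
end

section
/- For every probability mass function p on ℕ and every integer n ≥ 0, ∑_{u∈ℕ} n·p(u)²(1−p(u))^n ≤ e^{−1}. -/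
/-! Since `1 - x ≤ e^{-x}`, each term satisfies `n p² (1 - p)ⁿ ≤ p · (n p) e^{-n p} ≤ p / e`,
because `t e^{-t} ≤ e^{-1}`; summing over `u` and using `∑ p = 1` gives the bound. -/

open Real

theorem one_sub_pow_le_exp_neg_mul {x : ℝ} (hx : x ≤ 1) (n : ℕ) :
    (1 - x) ^ n ≤ exp (-(n * x)) :=
  calc (1 - x) ^ n ≤ exp (-x) ^ n := by
        gcongr
        exact one_sub_le_exp_neg x
    _ = exp (-(n * x)) := by rw [← exp_nat_mul, mul_neg]

theorem natCast_mul_mul_one_sub_pow_le_exp_neg_one {x : ℝ} (hx₀ : 0 ≤ x) (hx₁ : x ≤ 1) (n : ℕ) :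
    n * x * (1 - x) ^ n ≤ exp (-1) :=
  calc n * x * (1 - x) ^ n ≤ n * x * exp (-(n * x)) := by
        gcongr
        exact one_sub_pow_le_exp_neg_mul hx₁ n
    _ ≤ exp (-1) := mul_exp_neg_le_exp_neg_one _

/-- **Bound (12) of the paper.**
For every probability mass function `p` on `ℕ` and every integer `n ≥ 0`,
`∑_u n p(u)² (1-p(u))^n ≤ e⁻¹`. -/
theorem sum_n_p_sq_le_exp_neg_one
    (p : ℕ → ℝ) (hp_nonneg : ∀ u, 0 ≤ p u) (hp_sum : HasSum p 1) (n : ℕ) :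
    ∑' u : ℕ, (n : ℝ) * p u ^ 2 * (1 - p u) ^ n ≤ Real.exp (-1) := by
  have hp_le_one (u : ℕ) : p u ≤ 1 := le_hasSum hp_sum u fun i _ ↦ hp_nonneg i
  have term_nonneg (u : ℕ) : 0 ≤ (n : ℝ) * p u ^ 2 * (1 - p u) ^ n := by
    have := sub_nonneg.2 (hp_le_one u)
    positivity
  have term_le (u : ℕ) : (n : ℝ) * p u ^ 2 * (1 - p u) ^ n ≤ p u * exp (-1) :=
    calc (n : ℝ) * p u ^ 2 * (1 - p u) ^ n = p u * (n * p u * (1 - p u) ^ n) := by ring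
      _ ≤ p u * exp (-1) := by
        gcongr
        · exact hp_nonneg u
        · exact natCast_mul_mul_one_sub_pow_le_exp_neg_one (hp_nonneg u) (hp_le_one u) n
  have hsum : HasSum (fun u ↦ p u * exp (-1)) (exp (-1)) := by
    simpa using hp_sum.mul_right (exp (-1))
  calc ∑' u, (n : ℝ) * p u ^ 2 * (1 - p u) ^ n ≤ ∑' u, p u * exp (-1) :=
        (hsum.summable.of_nonneg_of_le term_nonneg term_le).tsum_le_tsum term_le hsum.summable
    _ = exp (-1) := hsum.tsum_eq
end

section
/- Fix a real constant c > 0, and for each n let p_n be the uniform probability mass function on the set {0, 1, …, ⌈cn⌉ − 1} ⊆ ℕ (so p_n(u) = 1/⌈cn⌉ for u < ⌈cn⌉ and 0 otherwise). Then n·R_n(M^GT, p_n) → (1/c + 1)·e^{−1/c} − e^{−2/c} as n → ∞. -/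
/-!
For the uniform distribution on `m` symbols,
`M^GT - M₀ = ∑_w (𝟙[N_w = 1]/n - 𝟙[N_w = 0]/m)`, so the risk is a second moment that only
involves the joint law of two symbol counts: the number of samples with `N_a = k` and `N_b = l`
is `C(n,k) C(n-k,l) (m-2)^(n-k-l)`. This gives `n R_n` in closed form as a combination of
`(1 - 1/m)^n` and `(1 - 2/m)^n`, and for `m = ⌈cn⌉` these tend to `e^{-1/c}` and `e^{-2/c}`.
-/

open scoped BigOperators

noncomputable section

/-- The uniform pmf on `{0, 1, …, m-1} ⊆ ℕ`. -/
def uniformPMF (m : ℕ) : ℕ → ℝ := fun u => if u < m then 1 / (m : ℝ) else 0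

open Finset

section FiberCounts

variable {ι α : Type*} [Fintype ι] [DecidableEq ι] [Fintype α] [DecidableEq α]

theorem card_filter_fiber_eq (a : α) (A : Finset ι) :
    #{y : ι → α | ({i | y i = a} : Finset ι) = A} =
      (Fintype.card α - 1) ^ (Fintype.card ι - #A) := by
  have hfilter : ({y : ι → α | ({i | y i = a} : Finset ι) = A} : Finset (ι → α)) =
      Fintype.piFinset fun i => if i ∈ A then {a} else {a}ᶜ := by
    ext y
    simp only [mem_filter, mem_univ, true_and, Fintype.mem_piFinset, Finset.ext_iff]
    refine forall_congr' fun i => ?_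
    split_ifs with hi <;> simp [hi]
  rw [hfilter, Fintype.card_piFinset]
  simp [apply_ite card, prod_ite, card_compl, filter_notMem_eq_sdiff, card_univ_sdiff]

theorem card_filter_fiber_eq_and_fiber_eq {a b : α} (hab : a ≠ b) {A B : Finset ι}
    (hAB : Disjoint A B) :
    #{y : ι → α | ({i | y i = a} : Finset ι) = A ∧ ({i | y i = b} : Finset ι) = B} =
      (Fintype.card α - 2) ^ (Fintype.card ι - #A - #B) := by
  have hfilter : ({y : ι → α | ({i | y i = a} : Finset ι) = A ∧
      ({i | y i = b} : Finset ι) = B} : Finset (ι → α)) =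
      Fintype.piFinset fun i => if i ∈ A then {a} else if i ∈ B then {b} else {a, b}ᶜ := by
    ext y
    simp only [mem_filter, mem_univ, true_and, Fintype.mem_piFinset, Finset.ext_iff,
      ← forall_and]
    refine forall_congr' fun i => ?_
    have hiAB : i ∈ A → i ∉ B := fun hi => disjoint_left.mp hAB hi
    split_ifs <;> simp [*] <;> grind
  rw [hfilter, Fintype.card_piFinset]
  simp [apply_ite card, prod_ite, card_compl, hab, filter_notMem_eq_sdiff, sdiff_sdiff_left,
    card_univ_sdiff, card_union_of_disjoint hAB, Nat.sub_sub]

theorem card_filter_card_fiber_eq (a : α) (k : ℕ) :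
    #{y : ι → α | #{i | y i = a} = k} =
      (Fintype.card ι).choose k * (Fintype.card α - 1) ^ (Fintype.card ι - k) := by
  rw [card_eq_sum_card_fiberwise (f := fun y => ({i | y i = a} : Finset ι))
    (t := powersetCard k univ) fun y hy => by simp_all]
  have hfiber : ∀ A ∈ powersetCard k (univ : Finset ι),
      #{y ∈ ({y : ι → α | #{i | y i = a} = k} : Finset _) |
        ({i | y i = a} : Finset ι) = A} =
        (Fintype.card α - 1) ^ (Fintype.card ι - k) := by
    intro A hA
    rw [mem_powersetCard] at hA
    rw [filter_filter, ← hA.2, ← card_filter_fiber_eq a A]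
    congr 1
    exact filter_congr fun y _ => ⟨And.right, fun h => ⟨h ▸ rfl, h⟩⟩
  rw [sum_congr rfl hfiber, sum_const, card_powersetCard, card_univ, smul_eq_mul]

theorem card_filter_fiber_eq_and_card_fiber_eq {a b : α} (hab : a ≠ b) (A : Finset ι)
    (l : ℕ) :
    #{y : ι → α | ({i | y i = a} : Finset ι) = A ∧ #{i | y i = b} = l} =
      (Fintype.card ι - #A).choose l * (Fintype.card α - 2) ^ (Fintype.card ι - #A - l) := by
  have hmaps : ∀ y ∈ ({y | ({i | y i = a} : Finset ι) = A ∧ #{i | y i = b} = l} :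
      Finset (ι → α)), ({i | y i = b} : Finset ι) ∈ powersetCard l (univ \ A) := by
    intro y hy
    obtain ⟨rfl, hl⟩ := (mem_filter.1 hy).2
    refine mem_powersetCard.2 ⟨fun i hi => ?_, hl⟩
    simp_all [eq_comm]
  rw [card_eq_sum_card_fiberwise hmaps]
  have hfiber : ∀ B ∈ powersetCard l (univ \ A),
      #{y ∈ ({y : ι → α | ({i | y i = a} : Finset ι) = A ∧ #{i | y i = b} = l} :
        Finset _) | ({i | y i = b} : Finset ι) = B} =
        (Fintype.card α - 2) ^ (Fintype.card ι - #A - l) := by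
    intro B hB
    rw [mem_powersetCard, subset_sdiff] at hB
    rw [filter_filter, ← hB.2, ← card_filter_fiber_eq_and_fiber_eq hab hB.1.2.symm]
    congr 1
    exact filter_congr fun y _ => ⟨fun h => ⟨h.1.1, h.2⟩, fun h => ⟨⟨h.1, h.2 ▸ rfl⟩, h.2⟩⟩
  rw [sum_congr rfl hfiber, sum_const, card_powersetCard, card_univ_sdiff, smul_eq_mul]

theorem card_filter_card_fiber_eq_and_card_fiber_eq {a b : α} (hab : a ≠ b) (k l : ℕ) :
    #{y : ι → α | #{i | y i = a} = k ∧ #{i | y i = b} = l} =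
      (Fintype.card ι).choose k * (Fintype.card ι - k).choose l *
        (Fintype.card α - 2) ^ (Fintype.card ι - k - l) := by
  rw [card_eq_sum_card_fiberwise (f := fun y => ({i | y i = a} : Finset ι))
    (t := powersetCard k univ) fun y hy => by simp_all]
  have hfiber : ∀ A ∈ powersetCard k (univ : Finset ι),
      #{y ∈ ({y : ι → α | #{i | y i = a} = k ∧ #{i | y i = b} = l} : Finset _) |
        ({i | y i = a} : Finset ι) = A} =
        (Fintype.card ι - k).choose l * (Fintype.card α - 2) ^ (Fintype.card ι - k - l) := by
    intro A hA
    rw [mem_powersetCard] at hA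
    rw [filter_filter, ← hA.2, ← card_filter_fiber_eq_and_card_fiber_eq hab A l]
    congr 1
    exact filter_congr fun y _ => ⟨fun h => ⟨h.2, h.1.2⟩, fun h => ⟨⟨h.1 ▸ rfl, h.2⟩, h.1⟩⟩
  rw [sum_congr rfl hfiber, sum_const, card_powersetCard, card_univ, smul_eq_mul, mul_assoc]

end FiberCounts

section ErrorTerms

variable {ι α : Type*} [Fintype ι] [DecidableEq ι] [Fintype α] [DecidableEq α]

def gtErrorTerm (y : ι → α) (a : α) : ℝ :=
  (if #{i | y i = a} = 1 then (Fintype.card ι : ℝ)⁻¹ else 0) -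
    if #{i | y i = a} = 0 then (Fintype.card α : ℝ)⁻¹ else 0

theorem sum_gtErrorTerm_sq (a : α) :
    ∑ y : ι → α, gtErrorTerm y a ^ 2 =
      (Fintype.card ι : ℝ)⁻¹ ^ 2 *
          ↑(Fintype.card ι * (Fintype.card α - 1) ^ (Fintype.card ι - 1)) +
        (Fintype.card α : ℝ)⁻¹ ^ 2 * ↑((Fintype.card α - 1) ^ Fintype.card ι) := by
  have hpoint : ∀ y : ι → α, gtErrorTerm y a ^ 2 =
      (if #{i | y i = a} = 1 then (Fintype.card ι : ℝ)⁻¹ ^ 2 else 0) +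
        if #{i | y i = a} = 0 then (Fintype.card α : ℝ)⁻¹ ^ 2 else 0 := by
    intro y
    unfold gtErrorTerm
    split_ifs <;> simp_all
  simp only [hpoint, sum_add_distrib, ← sum_filter, sum_const, nsmul_eq_mul,
    card_filter_card_fiber_eq]
  simp [mul_comm]

theorem sum_gtErrorTerm_mul {a b : α} (hab : a ≠ b) :
    ∑ y : ι → α, gtErrorTerm y a * gtErrorTerm y b =
      (Fintype.card ι : ℝ)⁻¹ ^ 2 *
          ↑(Fintype.card ι * (Fintype.card ι - 1) * (Fintype.card α - 2) ^ (Fintype.card ι - 2)) -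
        2 * ((Fintype.card ι : ℝ)⁻¹ * (Fintype.card α : ℝ)⁻¹) *
          ↑(Fintype.card ι * (Fintype.card α - 2) ^ (Fintype.card ι - 1)) +
        (Fintype.card α : ℝ)⁻¹ ^ 2 * ↑((Fintype.card α - 2) ^ Fintype.card ι) := by
  set u := (Fintype.card ι : ℝ)⁻¹
  set v := (Fintype.card α : ℝ)⁻¹
  have hpoint : ∀ y : ι → α, gtErrorTerm y a * gtErrorTerm y b =
      (if #{i | y i = a} = 1 ∧ #{i | y i = b} = 1 then u ^ 2 else 0) -
        (if #{i | y i = a} = 1 ∧ #{i | y i = b} = 0 then u * v else 0) -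
        (if #{i | y i = a} = 0 ∧ #{i | y i = b} = 1 then u * v else 0) +
        if #{i | y i = a} = 0 ∧ #{i | y i = b} = 0 then v ^ 2 else 0 := by
    intro y
    unfold gtErrorTerm
    split_ifs <;> simp_all <;> ring
  simp only [hpoint, sum_sub_distrib, sum_add_distrib, ← sum_filter, sum_const, nsmul_eq_mul,
    card_filter_card_fiber_eq_and_card_fiber_eq hab]
  simp only [Nat.choose_one_right, Nat.choose_zero_right, Nat.sub_sub, Nat.reduceAdd,
    Nat.cast_mul, Nat.cast_pow, mul_one, one_mul, tsub_zero]
  ring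

end ErrorTerms

theorem sum_sq_sum_eq_of_sum_mul {α β : Type*} [Fintype α] [DecidableEq α] [Fintype β]
    {g : α → β → ℝ} {d e : ℝ} (hdiag : ∀ a, ∑ y, g a y ^ 2 = d)
    (hoff : ∀ a b, a ≠ b → ∑ y, g a y * g b y = e) :
    ∑ y, (∑ a, g a y) ^ 2 = Fintype.card α * d + Fintype.card α * (Fintype.card α - 1) * e := by
  have hrow : ∀ a, ∑ b, ∑ y, g a y * g b y = d + (Fintype.card α - 1) * e := by
    intro a
    rw [← add_sum_erase _ _ (mem_univ a),
      sum_congr rfl fun b hb => hoff a b (ne_of_mem_erase hb).symm, sum_const,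
      card_erase_of_mem (mem_univ a), card_univ, nsmul_eq_mul, ← hdiag a]
    simp [sq, Nat.cast_pred (Fintype.card_pos_iff.2 ⟨a⟩)]
  calc ∑ y, (∑ a, g a y) ^ 2 = ∑ a, ∑ b, ∑ y, g a y * g b y := by
        simp_rw [sq, sum_mul_sum]
        rw [sum_comm]
        exact sum_congr rfl fun a _ => sum_comm
    _ = Fintype.card α * d + Fintype.card α * (Fintype.card α - 1) * e := by
        rw [sum_congr rfl fun a _ => hrow a, sum_const, card_univ, nsmul_eq_mul]
        ring

section UniformSample

variable {n m : ℕ}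

theorem nOcc_val_comp (y : Fin n → Fin m) (w : Fin m) :
    nOcc (Fin.val ∘ y) w = #{i | y i = w} := by
  simp [nOcc, Fin.val_eq_val]

theorem expct_uniformPMF (f : (Fin n → ℕ) → ℝ) :
    expct n (uniformPMF m) f = (m : ℝ)⁻¹ ^ n * ∑ y : Fin n → Fin m, f (Fin.val ∘ y) := by
  have hval : Function.Injective (Fin.val ∘ · : (Fin n → Fin m) → Fin n → ℕ) :=
    fun y y' h => funext fun i => Fin.val_injective (congrFun h i)
  have hsupp : ∀ x ∉ univ.image (Fin.val ∘ · : (Fin n → Fin m) → Fin n → ℕ),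
      sampleProb (uniformPMF m) x * f x = 0 := by
    intro x hx
    obtain ⟨i, hi⟩ : ∃ i, m ≤ x i := by
      by_contra! h
      exact hx (mem_image.2 ⟨fun i => ⟨x i, h i⟩, mem_univ _, rfl⟩)
    rw [sampleProb, prod_eq_zero (mem_univ i) (by simp [uniformPMF, hi.not_gt]), zero_mul]
  rw [expct, tsum_eq_sum hsupp, sum_image fun y _ y' _ h => hval h, mul_sum]
  refine sum_congr rfl fun y _ => ?_
  simp [sampleProb, uniformPMF]

theorem missingMass_uniformPMF_val_comp (y : Fin n → Fin m) :
    missingMass (uniformPMF m) (Fin.val ∘ y) =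
      ∑ w : Fin m, if #{i | y i = w} = 0 then (m : ℝ)⁻¹ else 0 := by
  have hsupp : ∀ u ∉ range m,
      (if nOcc (Fin.val ∘ y) u = 0 then uniformPMF m u else 0) = 0 := by
    intro u hu
    simp_all [uniformPMF]
  rw [missingMass, tsum_eq_sum hsupp, ← Fin.sum_univ_eq_sum_range]
  simp [uniformPMF, nOcc_val_comp]

theorem phi_one_val_comp (y : Fin n → Fin m) :
    phi 1 (Fin.val ∘ y) = #{w : Fin m | #{i | y i = w} = 1} := by
  have himage : ({w ∈ univ.image y | #{i | y i = w} = 1} : Finset (Fin m)) =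
      ({w | #{i | y i = w} = 1} : Finset (Fin m)) := by
    ext w
    simp only [mem_filter, mem_image, mem_univ, true_and, and_iff_right_iff_imp]
    intro h
    obtain ⟨i, hi⟩ := card_pos.1 (h ▸ Nat.one_pos)
    exact ⟨i, (mem_filter.1 hi).2⟩
  rw [phi, ← image_image, filter_image, card_image_of_injective _ Fin.val_injective, ← himage]
  simp [nOcc_val_comp]

theorem goodTuring_sub_missingMass_uniformPMF (y : Fin n → Fin m) :
    goodTuring (Fin.val ∘ y) - missingMass (uniformPMF m) (Fin.val ∘ y) =
      ∑ w, gtErrorTerm y w := by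
  rw [goodTuring, phi_one_val_comp, missingMass_uniformPMF_val_comp, natCast_card_filter,
    sum_div, ← sum_sub_distrib]
  simp [gtErrorTerm, div_eq_mul_inv]

end UniformSample

theorem natCast_mul_risk_goodTuring_uniformPMF {n m : ℕ} (hn : 2 ≤ n) (hm : 2 ≤ m) :
    n * risk n (uniformPMF m) goodTuring =
      (1 - 1 / m) ^ (n - 1) + n / m * (1 - 1 / m) ^ n +
        (1 - 1 / m) * (1 - 2 / m) ^ (n - 2) * (4 * n / m ^ 2 - 1) := by
  rw [risk, expct_uniformPMF]
  simp_rw [goodTuring_sub_missingMass_uniformPMF]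
  rw [sum_sq_sum_eq_of_sum_mul (g := fun a y => gtErrorTerm y a) sum_gtErrorTerm_sq
    fun a b hab => sum_gtErrorTerm_mul hab]
  obtain ⟨k, rfl⟩ : ∃ k, n = k + 2 := ⟨n - 2, by omega⟩
  have hm0 : (m : ℝ) ≠ 0 := by positivity
  simp only [Fintype.card_fin, Nat.add_sub_cancel, show k + 2 - 1 = k + 1 by omega]
  push_cast [Nat.cast_sub (by omega : 1 ≤ m), Nat.cast_sub hm]
  rw [one_sub_div hm0, one_sub_div hm0]
  simp only [div_pow, inv_pow, pow_succ]
  field_simp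
  ring

open Filter Topology

theorem tendsto_one_add_pow_sub_exp {g : ℕ → ℝ} {t : ℝ}
    (hg : Tendsto (fun n => n * g n) atTop (𝓝 t)) (j : ℕ) :
    Tendsto (fun n => (1 + g n) ^ (n - j)) atTop (𝓝 (Real.exp t)) := by
  have hg0 : Tendsto g atTop (𝓝 0) := by
    have := hg.mul (tendsto_inv_atTop_zero.comp tendsto_natCast_atTop_atTop)
    rw [mul_zero] at this
    refine this.congr' ?_
    filter_upwards [eventually_ne_atTop 0] with n hn
    simp only [Function.comp_apply]
    field_simp
  have hpow_j : Tendsto (fun n => (1 + g n) ^ j) atTop (𝓝 1) := by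
    simpa using ((tendsto_const_nhds (x := (1 : ℝ))).add hg0).pow j
  have hquot := (Real.tendsto_one_add_pow_exp_of_tendsto hg).div hpow_j one_ne_zero
  rw [div_one] at hquot
  refine hquot.congr' ?_
  filter_upwards [eventually_ge_atTop j, hg0.eventually_ne (by norm_num : (0 : ℝ) ≠ -1)]
    with n hjn hgn
  rw [Pi.div_apply, pow_sub₀ _ (by contrapose! hgn; linarith) hjn, div_eq_mul_inv]

theorem tendsto_natCast_div_ceil_mul {c : ℝ} (hc : 0 < c) :
    Tendsto (fun n : ℕ => (n : ℝ) / ⌈c * n⌉₊) atTop (𝓝 c⁻¹) := by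
  simpa [Function.comp_def, inv_div] using
    ((tendsto_nat_ceil_mul_div_atTop hc.le).comp tendsto_natCast_atTop_atTop).inv₀ hc.ne'

/-- **Risk of the Good-Turing estimator for uniform distributions** (equation (14)).
Fix `c > 0` and let `p_n` be uniform on `⌈cn⌉` symbols. Then
`n · R_n(M^GT, p_n) → (1/c + 1) e^{-1/c} - e^{-2/c}` as `n → ∞`. -/
theorem goodTuring_risk_uniform_limit (c : ℝ) (hc : 0 < c) :
    Filter.Tendsto
      (fun n : ℕ => (n : ℝ) * risk n (uniformPMF ⌈c * (n : ℝ)⌉₊) goodTuring)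
      Filter.atTop
      (nhds ((1 / c + 1) * Real.exp (-1 / c) - Real.exp (-2 / c))) := by
  set m : ℕ → ℝ := fun n => (⌈c * n⌉₊ : ℝ)
  have hm : Tendsto m atTop atTop := tendsto_natCast_atTop_atTop.comp
    (tendsto_nat_ceil_atTop.comp (tendsto_natCast_atTop_atTop.const_mul_atTop hc))
  have hinv : Tendsto (fun n => (m n)⁻¹) atTop (𝓝 0) := tendsto_inv_atTop_zero.comp hm
  have hratio : Tendsto (fun n : ℕ => n / m n) atTop (𝓝 c⁻¹) := tendsto_natCast_div_ceil_mul hc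
  have hpow : ∀ (k : ℝ) (j : ℕ),
      Tendsto (fun n => (1 - k / m n) ^ (n - j)) atTop (𝓝 (Real.exp (-k / c))) := by
    intro k j
    refine (tendsto_one_add_pow_sub_exp ?_ j).congr fun n => by rw [sub_eq_add_neg]
    simpa [div_eq_mul_inv, mul_comm, mul_left_comm] using hratio.const_mul (-k)
  have hlim := ((hpow 1 1).add (hratio.mul (by simpa using hpow 1 0))).add
    ((((tendsto_const_nhds (x := (1 : ℝ))).sub hinv).mul (hpow 2 2)).mul
      (((hratio.const_mul 4).mul hinv).sub (tendsto_const_nhds (x := (1 : ℝ)))))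
  have hvalue : Real.exp (-1 / c) + c⁻¹ * Real.exp (-1 / c) +
      (1 - 0) * Real.exp (-2 / c) * (4 * c⁻¹ * 0 - 1) =
      (1 / c + 1) * Real.exp (-1 / c) - Real.exp (-2 / c) := by ring
  rw [← hvalue]
  refine hlim.congr' ?_
  filter_upwards [eventually_ge_atTop 2, hm.eventually_ge_atTop 2] with n hn hmn
  rw [natCast_mul_risk_goodTuring_uniformPMF hn (Nat.cast_le.1 hmn)]
  simp only [m]
  ring
end
end

section
/- Fix an integer k ≥ 1 and let 𝒫_c be the set of probability mass functions p_c on the alphabet {0, 1, …, k} such that p_c(0) ≥ 1/2 and p_c(i) = (1 − p_c(0))/k for all 1 ≤ i ≤ k. Then the minimax squared-error risk for estimating p_c(0) from n i.i.d. samples satisfies liminf_{n→∞} n·inf_{p̂} sup_{p_c ∈ 𝒫_c} E_{X^n ∼ p_c^{⊗n}}[(p_c(0) − p̂(X^n))²] ≥ 1/4, where the infimum is over all estimators p̂ : {0,…,k}^n → [0,1]. -/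
/-!
The empirical frequency of `0` has risk `q(0)(1 - q(0))/n ≤ 1/(4n)`, so `n · minimaxPc k n` is
bounded; without this the real `liminf` would be a junk value.

For the lower bound fix a small `t > 0`, an estimator with worst-case risk `R < 1/(4n)`, and the
grid `θⱼ = 1/2 + j t/√n`, `j ≤ m`, with `m ≥ 1/t²` and `m t/√n ≤ t`. Under `θⱼ` the mean of the
estimator lies within `√R < 1/(2√n)` of `θⱼ`, so across the grid it rises by at least
`(m t - 1)/√n ≥ m (1 - t) t/√n`, and some single step rises by at least `(1 - t) t/√n`. By the
Chapman–Robbins inequality the square of that step is at most `χ² · R`, and the `χ²`-divergence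
between neighbouring product measures is `(1 + t²/(n θ(1 - θ)))ⁿ - 1 ≤ t²/(1/4 - 2t²)`. Hence
`nR ≥ (1 - t)²(1/4 - 2t²)`, which tends to `1/4` as `t → 0`.
-/

open scoped BigOperators

noncomputable section

/-- `q` belongs to the class `𝒫_c` of pmfs on the alphabet `{0, 1, …, k}` with
`q(0) ≥ 1/2` and `q(i) = (1 - q(0))/k` for all `1 ≤ i ≤ k`. -/
def MemPc (k : ℕ) (q : Fin (k + 1) → ℝ) : Prop :=
  (∀ u, 0 ≤ q u) ∧ (∑ u, q u) = 1 ∧ 1 / 2 ≤ q 0 ∧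
    ∀ i : Fin (k + 1), i ≠ 0 → q i = (1 - q 0) / k

/-- The minimax squared-error risk, with `n` samples, for estimating `q(0)` over the
class `𝒫_c`; the infimum is over all estimators `p̂ : {0,…,k}^n → [0,1]`. -/
def minimaxPc (k n : ℕ) : ℝ :=
  sInf {r : ℝ | ∃ phat : (Fin n → Fin (k + 1)) → ℝ,
    (∀ x, phat x ∈ Set.Icc (0 : ℝ) 1) ∧
    r = sSup {s : ℝ | ∃ q : Fin (k + 1) → ℝ, MemPc k q ∧
          s = ∑ x : Fin n → Fin (k + 1), (∏ i, q (x i)) * (q 0 - phat x) ^ 2}}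

open Finset Filter Topology

namespace MinimaxPc

section Expectation

variable {Ω : Type*} [Fintype Ω]

theorem sq_sub_sum_mul_le {P : Ω → ℝ} (hP : ∀ x, 0 ≤ P x) (hP1 : ∑ x, P x = 1)
    (f : Ω → ℝ) (θ : ℝ) : (θ - ∑ x, P x * f x) ^ 2 ≤ ∑ x, P x * (θ - f x) ^ 2 := by
  have hbias : θ - ∑ x, P x * f x = ∑ x, P x * (θ - f x) := by
    simp only [mul_sub, sum_sub_distrib, ← sum_mul, hP1, one_mul]
  calc (θ - ∑ x, P x * f x) ^ 2 = (∑ x, P x * (θ - f x)) ^ 2 := by rw [hbias]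
    _ ≤ (∑ x, P x) * ∑ x, P x * (θ - f x) ^ 2 :=
        sum_sq_le_sum_mul_sum_of_sq_le_mul _ (fun x _ => hP x)
          (fun x _ => mul_nonneg (hP x) (sq_nonneg _)) fun x _ => le_of_eq (by ring)
    _ = ∑ x, P x * (θ - f x) ^ 2 := by rw [hP1, one_mul]

theorem chapman_robbins {P Q : Ω → ℝ} (hP : ∀ x, 0 < P x) (hPQ : ∑ x, Q x = ∑ x, P x)
    (f : Ω → ℝ) (θ : ℝ) :
    (∑ x, Q x * f x - ∑ x, P x * f x) ^ 2 ≤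
      (∑ x, (Q x - P x) ^ 2 / P x) * ∑ x, P x * (θ - f x) ^ 2 := by
  have hshift : ∑ x, Q x * f x - ∑ x, P x * f x = ∑ x, (P x - Q x) * (θ - f x) := by
    simp only [sub_mul, mul_sub, sum_sub_distrib, ← sum_mul, hPQ]
    ring
  rw [hshift]
  refine sum_sq_le_sum_mul_sum_of_sq_le_mul _ (fun x _ => div_nonneg (sq_nonneg _) (hP x).le)
    (fun x _ => mul_nonneg (hP x).le (sq_nonneg _)) fun x _ => le_of_eq ?_
  field_simp [(hP x).ne']
  ring

theorem sum_sq_sub_div_eq {P Q : Ω → ℝ} (hP : ∀ x, P x ≠ 0) (hP1 : ∑ x, P x = 1)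
    (hQ1 : ∑ x, Q x = 1) : ∑ x, (Q x - P x) ^ 2 / P x = ∑ x, Q x ^ 2 / P x - 1 := by
  have hexpand : ∀ x, (Q x - P x) ^ 2 / P x = Q x ^ 2 / P x - 2 * Q x + P x := fun x => by
    field_simp [hP x]
    ring
  simp only [hexpand, sum_add_distrib, sum_sub_distrib, ← mul_sum, hP1, hQ1]
  ring

end Expectation

section Product

variable {α : Type*} [Fintype α] {n : ℕ}

theorem sum_prod_eq_one {q : α → ℝ} (hq : ∑ a, q a = 1) :
    ∑ x : Fin n → α, ∏ i, q (x i) = 1 := by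
  rw [← Fintype.sum_pow, hq, one_pow]

theorem sum_sq_prod_div_prod (q q' : α → ℝ) :
    ∑ x : Fin n → α, (∏ i, q' (x i)) ^ 2 / ∏ i, q (x i) = (∑ a, q' a ^ 2 / q a) ^ n := by
  simp only [Fintype.sum_pow, ← prod_pow, ← prod_div_distrib]

theorem sum_fin_succ_pi (F : (Fin (n + 1) → α) → ℝ) :
    ∑ x, F x = ∑ a, ∑ y : Fin n → α, F (Fin.cons a y) := by
  rw [← (Fin.consEquiv fun _ => α).sum_comp, Fintype.sum_prod_type]
  rfl

theorem sum_prod_mul_sum_eq_zero {q g : α → ℝ} (hq : ∑ a, q a = 1)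
    (hg : ∑ a, q a * g a = 0) : ∑ x : Fin n → α, (∏ i, q (x i)) * ∑ i, g (x i) = 0 := by
  induction n with
  | zero => simp
  | succ n ih =>
    have hsplit : ∀ a (y : Fin n → α), q a * (∏ i, q (y i)) * (g a + ∑ i, g (y i)) =
        q a * g a * ∏ i, q (y i) + q a * ((∏ i, q (y i)) * ∑ i, g (y i)) :=
      fun a y => by ring
    rw [sum_fin_succ_pi]
    simp only [Fin.prod_univ_succ, Fin.sum_univ_succ, Fin.cons_zero, Fin.cons_succ, hsplit,
      sum_add_distrib, ← mul_sum, ih, sum_prod_eq_one hq, ← sum_mul, hg]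
    simp

theorem sum_prod_mul_sum_sq {q g : α → ℝ} (hq : ∑ a, q a = 1) (hg : ∑ a, q a * g a = 0) :
    ∑ x : Fin n → α, (∏ i, q (x i)) * (∑ i, g (x i)) ^ 2 = n * ∑ a, q a * g a ^ 2 := by
  induction n with
  | zero => simp
  | succ n ih =>
    have hsplit : ∀ a (y : Fin n → α), q a * (∏ i, q (y i)) * (g a + ∑ i, g (y i)) ^ 2 =
        q a * g a ^ 2 * ∏ i, q (y i) + 2 * (q a * g a) * ((∏ i, q (y i)) * ∑ i, g (y i)) +
          q a * ((∏ i, q (y i)) * (∑ i, g (y i)) ^ 2) :=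
      fun a y => by ring
    rw [sum_fin_succ_pi]
    simp only [Fin.prod_univ_succ, Fin.sum_univ_succ, Fin.cons_zero, Fin.cons_succ, hsplit,
      sum_add_distrib, ← mul_sum, ih, sum_prod_mul_sum_eq_zero hq hg, sum_prod_eq_one hq,
      ← sum_mul, hg, hq]
    push_cast
    ring

end Product

theorem one_add_pow_sub_one_le {c a : ℝ} {n : ℕ} (hc : 0 ≤ c) (hnc : n * c ≤ a)
    (ha : a < 1) :
    (1 + c) ^ n - 1 ≤ a / (1 - a) := by
  have hpow : (1 + c) ^ n ≤ Real.exp a :=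
    calc (1 + c) ^ n ≤ Real.exp c ^ n := by
          gcongr
          linarith [Real.add_one_le_exp c]
      _ = Real.exp (n * c) := (Real.exp_nat_mul c n).symm
      _ ≤ Real.exp a := Real.exp_le_exp.mpr hnc
  have hexp := Real.exp_bound_div_one_sub_of_interval (hnc.trans' (by positivity)) ha
  have hsub : 1 / (1 - a) - 1 = a / (1 - a) := by
    field_simp [(by linarith : 1 - a ≠ 0)]
    ring
  linarith

theorem exists_lt_le_sub_succ {f : ℕ → ℝ} {m : ℕ} (hm : m ≠ 0) {d : ℝ}
    (hd : m * d ≤ f m - f 0) : ∃ j < m, d ≤ f (j + 1) - f j := by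
  have hsum : ∑ _j ∈ range m, d ≤ ∑ j ∈ range m, (f (j + 1) - f j) := by
    rwa [sum_range_sub, sum_const, card_range, nsmul_eq_mul]
  simpa using exists_le_of_sum_le (nonempty_range_iff.mpr hm) hsum

section SymmetricPmf

variable {k : ℕ} {θ : ℝ}

def symmPmf (k : ℕ) (θ : ℝ) : Fin (k + 1) → ℝ := fun u => if u = 0 then θ else (1 - θ) / k

@[simp]
theorem symmPmf_zero : symmPmf k θ 0 = θ := if_pos rfl

@[simp]
theorem symmPmf_succ (i : Fin k) : symmPmf k θ i.succ = (1 - θ) / k :=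
  if_neg (Fin.succ_ne_zero i)

theorem sum_symmPmf (hk : 0 < k) (θ : ℝ) : ∑ u, symmPmf k θ u = 1 := by
  have hk' : (k : ℝ) ≠ 0 := by positivity
  simp only [Fin.sum_univ_succ, symmPmf_zero, symmPmf_succ, sum_const, card_univ,
    Fintype.card_fin, nsmul_eq_mul]
  field_simp
  ring

theorem symmPmf_pos (hk : 0 < k) (h0 : 0 < θ) (h1 : θ < 1) (u : Fin (k + 1)) :
    0 < symmPmf k θ u := by
  unfold symmPmf
  split_ifs
  · exact h0
  · exact div_pos (by linarith) (by positivity)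

theorem memPc_symmPmf (hk : 0 < k) (h1 : 1 / 2 ≤ θ) (h2 : θ ≤ 1) :
    MemPc k (symmPmf k θ) := by
  refine ⟨fun u => ?_, sum_symmPmf hk θ, by simpa using h1,
    fun i hi => by simp [symmPmf, hi]⟩
  unfold symmPmf
  split_ifs
  · linarith
  · exact div_nonneg (by linarith) (Nat.cast_nonneg k)

theorem sum_sq_symmPmf_div (hk : 0 < k) (h0 : 0 < θ) (h1 : θ < 1) (h : ℝ) :
    ∑ u, symmPmf k (θ + h) u ^ 2 / symmPmf k θ u = 1 + h ^ 2 / (θ * (1 - θ)) := by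
  have hk' : (k : ℝ) ≠ 0 := by positivity
  have h1' : 1 - θ ≠ 0 := by linarith
  simp only [Fin.sum_univ_succ, symmPmf_zero, symmPmf_succ, sum_const, card_univ,
    Fintype.card_fin, nsmul_eq_mul]
  field_simp
  ring

theorem chiSq_symmPmf_pi_le (hk : 0 < k) {n : ℕ} {h a : ℝ} (h0 : 0 < θ) (h1 : θ < 1)
    (hnh : n * h ^ 2 ≤ a * (θ * (1 - θ))) (ha : a < 1) :
    ∑ x : Fin n → Fin (k + 1),
        ((∏ i, symmPmf k (θ + h) (x i)) - ∏ i, symmPmf k θ (x i)) ^ 2 / ∏ i, symmPmf k θ (x i)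
      ≤ a / (1 - a) := by
  have hpos := symmPmf_pos hk h0 h1
  rw [sum_sq_sub_div_eq (fun x => (prod_pos fun i _ => hpos (x i)).ne')
    (sum_prod_eq_one (sum_symmPmf hk θ)) (sum_prod_eq_one (sum_symmPmf hk (θ + h))),
    sum_sq_prod_div_prod, sum_sq_symmPmf_div hk h0 h1]
  have hvar : 0 < θ * (1 - θ) := mul_pos h0 (by linarith)
  refine one_add_pow_sub_one_le (by positivity) ?_ ha
  rw [mul_div_assoc', div_le_iff₀ hvar]
  exact hnh

end SymmetricPmf

section Risk

variable {k n : ℕ}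

def risk (q : Fin (k + 1) → ℝ) (phat : (Fin n → Fin (k + 1)) → ℝ) : ℝ :=
  ∑ x, (∏ i, q (x i)) * (q 0 - phat x) ^ 2

def maxRisk (k n : ℕ) (phat : (Fin n → Fin (k + 1)) → ℝ) : ℝ :=
  sSup {s : ℝ | ∃ q : Fin (k + 1) → ℝ, MemPc k q ∧ s = risk q phat}

theorem minimaxPc_eq_sInf_maxRisk : minimaxPc k n = sInf {r : ℝ |
    ∃ phat : (Fin n → Fin (k + 1)) → ℝ, (∀ x, phat x ∈ Set.Icc (0 : ℝ) 1) ∧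
      r = maxRisk k n phat} :=
  rfl

theorem MemPc.apply_zero_le_one {q : Fin (k + 1) → ℝ} (hq : MemPc k q) : q 0 ≤ 1 :=
  hq.2.1 ▸ single_le_sum (fun u _ => hq.1 u) (mem_univ 0)

theorem risk_nonneg {q : Fin (k + 1) → ℝ} (hq : ∀ u, 0 ≤ q u)
    (phat : (Fin n → Fin (k + 1)) → ℝ) : 0 ≤ risk q phat :=
  sum_nonneg fun x _ => mul_nonneg (prod_nonneg fun i _ => hq (x i)) (sq_nonneg _)

theorem risk_le_one {q : Fin (k + 1) → ℝ} (hq : MemPc k q)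
    {phat : (Fin n → Fin (k + 1)) → ℝ} (hphat : ∀ x, phat x ∈ Set.Icc (0 : ℝ) 1) :
    risk q phat ≤ 1 := by
  have hq0 := MemPc.apply_zero_le_one hq
  calc risk q phat ≤ ∑ x : Fin n → Fin (k + 1), (∏ i, q (x i)) * 1 := by
        refine sum_le_sum fun x _ => mul_le_mul_of_nonneg_left ?_
          (prod_nonneg fun i _ => hq.1 (x i))
        obtain ⟨hx0, hx1⟩ := hphat x
        nlinarith [hq.1 0]
    _ = 1 := by simp only [mul_one, sum_prod_eq_one hq.2.1]

theorem risk_le_maxRisk {q : Fin (k + 1) → ℝ} (hq : MemPc k q)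
    {phat : (Fin n → Fin (k + 1)) → ℝ} (hphat : ∀ x, phat x ∈ Set.Icc (0 : ℝ) 1) :
    risk q phat ≤ maxRisk k n phat :=
  le_csSup ⟨1, by rintro _ ⟨q', hq', rfl⟩; exact risk_le_one hq' hphat⟩ ⟨q, hq, rfl⟩

theorem maxRisk_nonneg (hk : 0 < k) {phat : (Fin n → Fin (k + 1)) → ℝ}
    (hphat : ∀ x, phat x ∈ Set.Icc (0 : ℝ) 1) : 0 ≤ maxRisk k n phat :=
  have hq := memPc_symmPmf hk le_rfl (by norm_num : (1 / 2 : ℝ) ≤ 1)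
  (risk_nonneg hq.1 phat).trans (risk_le_maxRisk hq hphat)

theorem maxRisk_le (hk : 0 < k) {phat : (Fin n → Fin (k + 1)) → ℝ} {r : ℝ}
    (h : ∀ q, MemPc k q → risk q phat ≤ r) : maxRisk k n phat ≤ r :=
  csSup_le ⟨_, symmPmf k 1, memPc_symmPmf hk (by norm_num) le_rfl, rfl⟩
    (by rintro _ ⟨q, hq, rfl⟩; exact h q hq)

def mean (q : Fin (k + 1) → ℝ) (phat : (Fin n → Fin (k + 1)) → ℝ) : ℝ :=
  ∑ x, (∏ i, q (x i)) * phat x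

theorem sq_sub_mean_le_risk {q : Fin (k + 1) → ℝ} (hq0 : ∀ u, 0 ≤ q u) (hq1 : ∑ u, q u = 1)
    (phat : (Fin n → Fin (k + 1)) → ℝ) : (q 0 - mean q phat) ^ 2 ≤ risk q phat :=
  sq_sub_sum_mul_le (fun x => prod_nonneg fun i _ => hq0 (x i)) (sum_prod_eq_one hq1) phat
    (q 0)

end Risk

section Upper

variable {k n : ℕ}

def empiricalFreq (x : Fin n → Fin (k + 1)) : ℝ :=
  (∑ i, if x i = 0 then 1 else 0) / n

theorem empiricalFreq_mem_Icc (x : Fin n → Fin (k + 1)) :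
    empiricalFreq x ∈ Set.Icc (0 : ℝ) 1 := by
  have hcount : ∑ i, (if x i = 0 then 1 else 0 : ℝ) ≤ n := by
    calc ∑ i, (if x i = 0 then 1 else 0 : ℝ) ≤ ∑ _i : Fin n, (1 : ℝ) :=
          sum_le_sum fun i _ => by split_ifs <;> norm_num
      _ = n := by simp
  exact ⟨div_nonneg (sum_nonneg fun i _ => by split_ifs <;> norm_num) n.cast_nonneg,
    div_le_one_of_le₀ hcount n.cast_nonneg⟩

theorem risk_empiricalFreq (hn : n ≠ 0) {q : Fin (k + 1) → ℝ} (hq : ∑ u, q u = 1) :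
    risk q (empiricalFreq (n := n)) = q 0 * (1 - q 0) / n := by
  set g : Fin (k + 1) → ℝ := fun u => (if u = 0 then 1 else 0) - q 0
  have hmean : ∑ u, q u * g u = 0 := by simp [g, mul_sub, ← sum_mul, hq]
  have hvar : ∑ u, q u * g u ^ 2 = q 0 * (1 - q 0) := by
    simp only [g, sub_sq, mul_add, mul_sub, sum_add_distrib, sum_sub_distrib]
    simp [← sum_mul, hq]
    ring
  have hn' : (n : ℝ) ≠ 0 := by positivity
  have herr : ∀ x : Fin n → Fin (k + 1), (q 0 - empiricalFreq x) ^ 2 =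
      (∑ i, g (x i)) ^ 2 / n ^ 2 := fun x => by
    simp only [g, empiricalFreq, sum_sub_distrib, sum_const, card_univ, Fintype.card_fin,
      nsmul_eq_mul]
    field_simp
    ring
  simp only [risk, herr, mul_div_assoc', ← sum_div, sum_prod_mul_sum_sq hq hmean, hvar]
  field_simp

theorem mul_minimaxPc_le (hk : 0 < k) (hn : n ≠ 0) : n * minimaxPc k n ≤ 1 / 4 := by
  have hn' : (0 : ℝ) < n := by positivity
  rw [← le_div_iff₀' hn', minimaxPc_eq_sInf_maxRisk]
  refine le_trans (csInf_le ⟨0, ?_⟩ ⟨empiricalFreq, empiricalFreq_mem_Icc, rfl⟩) ?_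
  · rintro _ ⟨phat, hphat, rfl⟩
    exact maxRisk_nonneg hk hphat
  refine maxRisk_le hk fun q hq => ?_
  rw [risk_empiricalFreq hn hq.2.1]
  exact div_le_div_of_nonneg_right (by nlinarith [sq_nonneg (q 0 - 1 / 2)]) hn'.le

end Upper

section Lower

variable {k n : ℕ}

theorem sq_mean_symmPmf_sub_le (hk : 0 < k) {t h θ : ℝ} (ht : t ≤ 1 / 10)
    (hθ : θ ∈ Set.Icc (1 / 2) (1 / 2 + t)) (hnh : n * h ^ 2 ≤ t ^ 2)
    (phat : (Fin n → Fin (k + 1)) → ℝ) :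
    (mean (symmPmf k (θ + h)) phat - mean (symmPmf k θ) phat) ^ 2 ≤
      t ^ 2 / (1 / 4 - 2 * t ^ 2) * risk (symmPmf k θ) phat := by
  obtain ⟨hθ0, hθ1⟩ := hθ
  have ht2 : t ^ 2 ≤ 1 / 100 := by nlinarith [hθ0.trans hθ1]
  have hpos := symmPmf_pos hk (by linarith) (by linarith)
  have hcr := chapman_robbins (fun x => prod_pos fun i _ => hpos (x i))
    ((sum_prod_eq_one (sum_symmPmf hk (θ + h))).trans
      (sum_prod_eq_one (sum_symmPmf hk θ)).symm) phat θ
  have hvar : 1 / 4 - t ^ 2 ≤ θ * (1 - θ) := by nlinarith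
  have hd : 0 < 1 / 4 - t ^ 2 := by linarith
  have hnh' : n * h ^ 2 ≤ t ^ 2 / (1 / 4 - t ^ 2) * (θ * (1 - θ)) :=
    calc n * h ^ 2 ≤ t ^ 2 / (1 / 4 - t ^ 2) * (1 / 4 - t ^ 2) := by
          rwa [div_mul_cancel₀ _ hd.ne']
      _ ≤ t ^ 2 / (1 / 4 - t ^ 2) * (θ * (1 - θ)) := by gcongr
  have hchi := chiSq_symmPmf_pi_le hk (by linarith) (by linarith) hnh'
    ((div_lt_one hd).mpr (by linarith))
  have hA : t ^ 2 / (1 / 4 - t ^ 2) / (1 - t ^ 2 / (1 / 4 - t ^ 2)) =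
      t ^ 2 / (1 / 4 - 2 * t ^ 2) := by
    rw [one_sub_div hd.ne', div_div_div_cancel_right₀ hd.ne']
    ring_nf
  rw [hA] at hchi
  simp only [mean, risk, symmPmf_zero]
  exact hcr.trans (mul_le_mul_of_nonneg_right hchi
    (sum_nonneg fun x _ => mul_nonneg (prod_pos fun i _ => hpos (x i)).le (sq_nonneg _)))

theorem le_mul_of_risk_symmPmf_le (hk : 0 < k) {t h R : ℝ} {m : ℕ} (ht0 : 0 < t)
    (ht : t ≤ 1 / 10) (hh : 0 < h) (hnh : n * h ^ 2 = t ^ 2) (hmh : m * h ≤ t) (hmt : 1 ≤ m * t ^ 2)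
    (phat : (Fin n → Fin (k + 1)) → ℝ)
    (hR : ∀ θ ∈ Set.Icc (1 / 2) (1 / 2 + t), risk (symmPmf k θ) phat ≤ R) :
    (1 - t) ^ 2 * (1 / 4 - 2 * t ^ 2) ≤ n * R := by
  rcases le_or_gt (1 / 4) (n * R) with hR4 | hR4
  · nlinarith
  set θ : ℕ → ℝ := fun j => 1 / 2 + j * h
  set f : ℕ → ℝ := fun j => mean (symmPmf k (θ j)) phat
  have hθ : ∀ j ≤ m, θ j ∈ Set.Icc (1 / 2) (1 / 2 + t) := fun j hj => by
    have : (j : ℝ) * h ≤ m * h := by gcongr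
    constructor <;> simp only [θ] <;> nlinarith
  have hm : m ≠ 0 := by rintro rfl; norm_num at hmt
  have hbias : ∀ j ≤ m, |θ j - f j| ≤ h / (2 * t) := fun j hj => by
    have hq := memPc_symmPmf hk (hθ j hj).1 (by linarith [(hθ j hj).2])
    refine abs_le_of_sq_le_sq ?_ (by positivity)
    calc (θ j - f j) ^ 2 ≤ R := by
          simpa using (sq_sub_mean_le_risk hq.1 hq.2.1 phat).trans (hR _ (hθ j hj))
      _ ≤ (h / (2 * t)) ^ 2 := by
          rw [div_pow, le_div_iff₀ (by positivity), mul_pow, ← hnh]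
          nlinarith [sq_pos_of_pos hh]
  have hrise : m * (h * (1 - t)) ≤ f m - f 0 := by
    obtain ⟨h0, -⟩ := abs_le.mp (hbias 0 m.zero_le)
    obtain ⟨-, hm'⟩ := abs_le.mp (hbias m le_rfl)
    have hθm : θ m - θ 0 = m * h := by simp [θ]
    have hslack : h / t ≤ m * h * t := by
      rw [div_le_iff₀ ht0]
      nlinarith
    have : 2 * (h / (2 * t)) = h / t := by field_simp
    nlinarith
  obtain ⟨j, hjm, hgap⟩ := exists_lt_le_sub_succ hm hrise
  have hd : 0 < 1 / 4 - 2 * t ^ 2 := by nlinarith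
  have hstep : (f (j + 1) - f j) ^ 2 ≤ t ^ 2 / (1 / 4 - 2 * t ^ 2) * R := by
    have hθs : θ (j + 1) = θ j + h := by simp only [θ]; push_cast; ring
    simp only [f, hθs]
    exact (sq_mean_symmPmf_sub_le hk ht (hθ j hjm.le) hnh.le phat).trans
      (mul_le_mul_of_nonneg_left (hR _ (hθ j hjm.le)) (div_nonneg (sq_nonneg t) hd.le))
  have hsq : (h * (1 - t)) ^ 2 * (1 / 4 - 2 * t ^ 2) ≤ t ^ 2 * R := by
    rw [← le_div_iff₀ hd, ← div_mul_eq_mul_div]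
    exact (pow_le_pow_left₀ (by nlinarith) hgap 2).trans hstep
  have hscaled : t ^ 2 * ((1 - t) ^ 2 * (1 / 4 - 2 * t ^ 2)) ≤ t ^ 2 * (n * R) :=
    calc t ^ 2 * ((1 - t) ^ 2 * (1 / 4 - 2 * t ^ 2))
        = n * ((h * (1 - t)) ^ 2 * (1 / 4 - 2 * t ^ 2)) := by rw [← hnh]; ring
      _ ≤ n * (t ^ 2 * R) := by gcongr
      _ = t ^ 2 * (n * R) := by ring
  exact le_of_mul_le_mul_left hscaled (by positivity)

theorem eventually_le_mul_minimaxPc (hk : 0 < k) {t : ℝ} (ht0 : 0 < t) (ht : t ≤ 1 / 10) :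
    ∀ᶠ n : ℕ in atTop, (1 - t) ^ 2 * (1 / 4 - 2 * t ^ 2) ≤ n * minimaxPc k n := by
  set m := ⌈1 / t ^ 2⌉₊
  filter_upwards [eventually_ge_atTop (max 1 (m ^ 2))] with n hn
  have hn0 : (0 : ℝ) < n := by exact_mod_cast (le_max_left _ _).trans hn
  have hmn : (m : ℝ) ^ 2 ≤ n := by exact_mod_cast (le_max_right _ _).trans hn
  have hnh : n * (t / √n) ^ 2 = t ^ 2 := by
    rw [div_pow, Real.sq_sqrt hn0.le]
    field_simp
  have hmh : m * (t / √n) ≤ t := by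
    rw [mul_div_assoc', div_le_iff₀ (by positivity), mul_comm]
    exact mul_le_mul_of_nonneg_left (Real.le_sqrt_of_sq_le hmn) ht0.le
  have hmt : 1 ≤ m * t ^ 2 := by
    rw [← div_le_iff₀ (by positivity)]
    exact Nat.le_ceil _
  rw [← div_le_iff₀' hn0, minimaxPc_eq_sInf_maxRisk]
  refine le_csInf ⟨_, fun _ => 1 / 2, fun _ => by norm_num, rfl⟩ ?_
  rintro _ ⟨phat, hphat, rfl⟩
  rw [div_le_iff₀' hn0]
  exact le_mul_of_risk_symmPmf_le hk ht0 ht (by positivity) hnh hmh hmt phat fun θ hθ =>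
    risk_le_maxRisk (memPc_symmPmf hk hθ.1 (by linarith [hθ.2])) hphat

end Lower

end MinimaxPc

/-- **Lemma 8:** for every `k ≥ 1`, the minimax squared-error risk for estimating
`p_c(0)` from `n` i.i.d. samples of a pmf in `𝒫_c` satisfies
`liminf_{n→∞} n · inf_{p̂} sup_{p_c ∈ 𝒫_c} E[(p_c(0) - p̂(X^n))²] ≥ 1/4`. -/
theorem minimax_Pc_liminf_ge (k : ℕ) (hk : 1 ≤ k) :
    1 / 4 ≤ Filter.liminf (fun n : ℕ => (n : ℝ) * minimaxPc k n) Filter.atTop := by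
  have hcobdd : IsCoboundedUnder (· ≥ ·) atTop fun n : ℕ => (n : ℝ) * minimaxPc k n :=
    isCoboundedUnder_ge_of_eventually_le atTop
      ((eventually_ne_atTop 0).mono fun n hn => MinimaxPc.mul_minimaxPc_le hk hn)
  have hlim :
      Tendsto (fun t : ℝ => (1 - t) ^ 2 * (1 / 4 - 2 * t ^ 2)) (𝓝[>] 0) (𝓝 (1 / 4)) := by
    have hcont : Continuous fun t : ℝ => (1 - t) ^ 2 * (1 / 4 - 2 * t ^ 2) := by fun_prop
    simpa using (hcont.tendsto 0).mono_left nhdsWithin_le_nhds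
  refine le_of_tendsto hlim ?_
  filter_upwards [Ioc_mem_nhdsGT (by norm_num : (0 : ℝ) < 1 / 10)] with t ⟨ht0, ht⟩
  exact le_liminf_of_le hcobdd (MinimaxPc.eventually_le_mul_minimaxPc hk ht0 ht)
end
end
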